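/- arXiv:1507.02559 — 2 statements merged into one kernel-verified Lean document; each statement's English description precedes it below -/
import Mathlib

section
/- There exist a finite collection D₁,…,D_N of dyadic grids in ℝⁿ (with N depending only on n) and a constant C = C(n,α) such that for every 0<α<n and every non-negative measurable function f on ℝⁿ, I_α f(x) ≤ C sup_{1≤i≤N} I_α^{D_i} f(x) for all x ∈ ℝⁿ. -/
open MeasureTheory ENNReal Set Filter

noncomputable section

abbrev Rn (n : ℕ) := EuclideanSpace ℝ (Fin n)

/-- The half-open cube with corner `a` and side length `h`. -/
def cube {n : ℕ} (a : Rn n) (h : ℝ) : Set (Rn n) :=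
  {x | ∀ i, a i ≤ x i ∧ x i < a i + h}

/-- Average of an `ℝ≥0∞`-valued function over a set (w.r.t. Lebesgue measure). -/
def eavg {n : ℕ} (Q : Set (Rn n)) (g : Rn n → ℝ≥0∞) : ℝ≥0∞ :=
  (volume Q)⁻¹ * ∫⁻ x in Q, g x

/-- A weight: a measurable `ℝ≥0∞`-valued function which is integrable on every cube. -/
def IsWeight {n : ℕ} (w : Rn n → ℝ≥0∞) : Prop :=
  Measurable w ∧ ∀ (a : Rn n) (h : ℝ), 0 < h → (∫⁻ x in cube a h, w x) < ∞

/-- The fractional integral (Riesz potential) `I_α f`. -/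
def fracInt {n : ℕ} (α : ℝ) (f : Rn n → ℝ) (x : Rn n) : ℝ :=
  ∫ y, f y / ‖x - y‖ ^ ((n : ℝ) - α)

/-- The fractional integral of a nonnegative function, as a lower integral. -/
def fracIntNN {n : ℕ} (α : ℝ) (f : Rn n → ℝ) (x : Rn n) : ℝ≥0∞ :=
  ∫⁻ y, ENNReal.ofReal (f y) / ENNReal.ofReal (‖x - y‖ ^ ((n : ℝ) - α))

/-- The commutator `[b, I_α] f`. -/
def commFracInt {n : ℕ} (α : ℝ) (b f : Rn n → ℝ) (x : Rn n) : ℝ :=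
  ∫ y, (b x - b y) * f y / ‖x - y‖ ^ ((n : ℝ) - α)

/-- The `A_{1,q}` characteristic of a weight. -/
def A1qConst {n : ℕ} (q : ℝ) (w : Rn n → ℝ≥0∞) : ℝ≥0∞ :=
  ⨆ (a : Rn n) (h : ℝ) (_ : 0 < h),
    essSup (fun x => (eavg (cube a h) fun y => w y ^ q) ^ (1 / q) * (w x)⁻¹)
      (volume.restrict (cube a h))

/-- The `A_{p,q}` characteristic of a weight (`p'` is the conjugate exponent of `p`). -/
def ApqConst {n : ℕ} (p' q : ℝ) (w : Rn n → ℝ≥0∞) : ℝ≥0∞ :=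
  ⨆ (a : Rn n) (h : ℝ) (_ : 0 < h),
    (eavg (cube a h) fun y => w y ^ q) ^ (1 / q) *
      (eavg (cube a h) fun y => w y ^ (-p')) ^ (1 / p')

/-- The Muckenhoupt `A_p` characteristic of a weight. -/
def ApConst {n : ℕ} (p : ℝ) (σ : Rn n → ℝ≥0∞) : ℝ≥0∞ :=
  ⨆ (a : Rn n) (h : ℝ) (_ : 0 < h),
    eavg (cube a h) σ * (eavg (cube a h) fun y => σ y ^ (1 - p / (p - 1))) ^ (p - 1)

/-- The BMO norm. -/
def bmoNorm {n : ℕ} (b : Rn n → ℝ) : ℝ≥0∞ :=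
  ⨆ (a : Rn n) (h : ℝ) (_ : 0 < h),
    eavg (cube a h) fun x => ENNReal.ofReal |b x - ⨍ y in cube a h, b y|

/-- A dyadic grid: a family of (corner, side length) data of cubes. -/
structure DyadicGrid (n : ℕ) where
  cubes : Set (Rn n × ℝ)
  side_pow : ∀ c ∈ cubes, ∃ k : ℤ, c.2 = (2 : ℝ) ^ k
  nested : ∀ c ∈ cubes, ∀ c' ∈ cubes,
    cube c.1 c.2 ∩ cube c'.1 c'.2 = cube c.1 c.2 ∨
      cube c.1 c.2 ∩ cube c'.1 c'.2 = cube c'.1 c'.2 ∨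
      cube c.1 c.2 ∩ cube c'.1 c'.2 = ∅
  partition : ∀ k : ℤ, ∀ x : Rn n, ∃! c, c ∈ cubes ∧ c.2 = (2 : ℝ) ^ k ∧ x ∈ cube c.1 c.2

/-- A sparse family of cubes. -/
def IsSparse {n : ℕ} (S : Set (Rn n × ℝ)) : Prop :=
  ∀ c ∈ S,
    volume (⋃ c' ∈ {c' ∈ S | cube c'.1 c'.2 ⊂ cube c.1 c.2}, cube c'.1 c'.2) ≤
      volume (cube c.1 c.2) / 2

/-- The dyadic fractional integral operator associated to a family `S` of cubes. -/
def sumIalpha {n : ℕ} (α : ℝ) (S : Set (Rn n × ℝ)) (f : Rn n → ℝ) (x : Rn n) : ℝ≥0∞ :=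
  ∑' c : S, (cube c.1.1 c.1.2).indicator
    (fun _ => volume (cube c.1.1 c.1.2) ^ (α / (n : ℝ)) *
      eavg (cube c.1.1 c.1.2) fun y => ENNReal.ofReal (f y)) x

/-- The dyadic commutator associated to a family `S` of cubes. -/
def sumComm {n : ℕ} (α : ℝ) (S : Set (Rn n × ℝ)) (b f : Rn n → ℝ) (x : Rn n) : ℝ≥0∞ :=
  ∑' c : S, (cube c.1.1 c.1.2).indicator
    (fun z => volume (cube c.1.1 c.1.2) ^ (α / (n : ℝ)) *
      eavg (cube c.1.1 c.1.2) fun y => ENNReal.ofReal (|b z - b y| * f y)) x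

/-- The dyadic fractional maximal operator associated to a family `S` of cubes. -/
def dyadicMax {n : ℕ} (α : ℝ) (S : Set (Rn n × ℝ)) (f : Rn n → ℝ) (x : Rn n) : ℝ≥0∞ :=
  ⨆ (c : S) (_ : x ∈ cube c.1.1 c.1.2),
    volume (cube c.1.1 c.1.2) ^ (α / (n : ℝ)) *
      eavg (cube c.1.1 c.1.2) fun y => ENNReal.ofReal |f y|

/-- The normalized Luxemburg norm of `f` on `Q` w.r.t. the Young function `Φ`
and the measure `σ dx`. -/
def luxNorm {n : ℕ} (Φ : ℝ → ℝ) (Q : Set (Rn n)) (σ : Rn n → ℝ≥0∞) (f : Rn n → ℝ) : ℝ≥0∞ :=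
  sInf {l : ℝ≥0∞ | ∃ lr : ℝ, 0 < lr ∧ l = ENNReal.ofReal lr ∧
    (∫⁻ x in Q, σ x)⁻¹ * ∫⁻ x in Q, ENNReal.ofReal (Φ (|f x| / lr)) * σ x ≤ 1}

/-- The weighted dyadic Orlicz fractional maximal operator. -/
def maxOrlicz {n : ℕ} (Φ : ℝ → ℝ) (α : ℝ) (S : Set (Rn n × ℝ)) (σ : Rn n → ℝ≥0∞)
    (f : Rn n → ℝ) (x : Rn n) : ℝ≥0∞ :=
  ⨆ (c : S) (_ : x ∈ cube c.1.1 c.1.2),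
    (∫⁻ y in cube c.1.1 c.1.2, σ y) ^ (α / (n : ℝ)) * luxNorm Φ (cube c.1.1 c.1.2) σ f

/-- The weighted dyadic fractional maximal operator (`Φ(t) = t` case). -/
def maxWeighted {n : ℕ} (α : ℝ) (S : Set (Rn n × ℝ)) (σ : Rn n → ℝ≥0∞)
    (f : Rn n → ℝ) (x : Rn n) : ℝ≥0∞ :=
  ⨆ (c : S) (_ : x ∈ cube c.1.1 c.1.2),
    (∫⁻ y in cube c.1.1 c.1.2, σ y) ^ (α / (n : ℝ)) *
      ((∫⁻ y in cube c.1.1 c.1.2, σ y)⁻¹ * ∫⁻ y in cube c.1.1 c.1.2, ENNReal.ofReal |f y| * σ y)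

section AuxDyadic


def eps (k : ℤ) : ℤ := if Even k then 1 else -1

lemma eps_mul_self (k : ℤ) : eps k * eps k = 1 := by
  unfold eps; split <;> norm_num

lemma eps_add (a b : ℤ) : eps (a + b) = eps a * eps b := by
  unfold eps
  by_cases ha : Even a <;> by_cases hb : Even b <;>
    simp [Int.even_add, ha, hb]

lemma two_pow_cast_zmod (d : ℕ) : ((2:ZMod 3))^d = ((eps d : ℤ) : ZMod 3) := by
  have h2 : (2 : ZMod 3) = -1 := by decide
  rw [h2]
  rcases Nat.even_or_odd d with h | h
  · rw [h.neg_one_pow]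
    have : Even (d:ℤ) := by exact_mod_cast h
    simp [eps, this]
  · rw [h.neg_one_pow]
    have : ¬ Even (d:ℤ) := by
      rw [Int.not_even_iff_odd]; exact_mod_cast h
    simp [eps, this]

lemma zpow_two_inj {a b : ℤ} (h : (2:ℝ)^a = 2^b) : a = b :=
  zpow_right_injective₀ (by norm_num) (by norm_num) h


lemma scaled_iff {p u : ℝ} (hp : 0 < p) (M : ℤ) :
    (p * M / 3 ≤ u ∧ u < p * M / 3 + p) ↔ (p*M ≤ 3*u ∧ 3*u < p*M + 3*p) := by
  constructor <;> rintro ⟨h1, h2⟩ <;> constructor <;> linarith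

lemma oneD_partition (k : ℤ) (ρ : ZMod 3) (u : ℝ) :
    ∃! M : ℤ, ((M : ZMod 3) = ρ ∧ (2:ℝ)^k * M / 3 ≤ u ∧ u < (2:ℝ)^k * M / 3 + 2^k) := by
  have hp : (0:ℝ) < 2^k := by positivity
  set p : ℝ := (2:ℝ)^k with hpdef
  obtain ⟨r, hr⟩ : ∃ r : ℤ, (r : ZMod 3) = ρ := ⟨(ρ.val : ℤ), by
    simp [ZMod.intCast_cast, ZMod.natCast_val, ZMod.cast_id]⟩
  set q : ℤ := ⌊(3*u/p - r)/3⌋ with hq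
  refine ⟨r + 3*q, ⟨by push_cast; rw [hr, show (3:ZMod 3) = 0 by decide]; ring, ?_⟩, ?_⟩
  · rw [scaled_iff hp]
    have h1 : (q:ℝ) ≤ (3*u/p - r)/3 := Int.floor_le _
    have h2 : (3*u/p - r)/3 < q + 1 := Int.lt_floor_add_one _
    have h1' : ((r + 3*q : ℤ):ℝ) ≤ 3*u/p := by push_cast; linarith
    have h2' : 3*u/p < ((r + 3*q : ℤ):ℝ) + 3 := by push_cast; linarith
    have e : p * (3*u/p) = 3*u := by field_simp
    constructor
    · have := mul_le_mul_of_nonneg_left h1' hp.le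
      rw [e] at this; linarith
    · have := mul_lt_mul_of_pos_left h2' hp
      rw [e] at this; linarith
  · rintro M' ⟨hres, hM'⟩
    rw [scaled_iff hp] at hM'
    have hMineq : p * ((r+3*q : ℤ):ℝ) ≤ 3*u ∧ 3*u < p * ((r+3*q:ℤ):ℝ) + 3*p := by
      rw [← scaled_iff hp]
      -- re-derive from part above; just redo
      have h1 : (q:ℝ) ≤ (3*u/p - r)/3 := Int.floor_le _
      have h2 : (3*u/p - r)/3 < q + 1 := Int.lt_floor_add_one _
      have h1' : ((r + 3*q : ℤ):ℝ) ≤ 3*u/p := by push_cast; linarith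
      have h2' : 3*u/p < ((r + 3*q : ℤ):ℝ) + 3 := by push_cast; linarith
      have e : p * (3*u/p) = 3*u := by field_simp
      have i1 := mul_le_mul_of_nonneg_left h1' hp.le
      rw [e] at i1
      have i2 := mul_lt_mul_of_pos_left h2' hp
      rw [e] at i2
      rw [scaled_iff hp]
      exact ⟨by linarith, by linarith⟩
    -- now |M' - (r+3q)| < 3 and congruent mod 3
    have c1 : p * (M':ℝ) < p * (((r+3*q:ℤ):ℝ) + 3) := by linarith [hM'.1, hM'.2, hMineq.1, hMineq.2]
    have c2 : p * (((r+3*q:ℤ):ℝ)) < p * ((M':ℝ) + 3) := by linarith [hM'.1, hM'.2, hMineq.1, hMineq.2]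
    have d1 : (M':ℝ) < ((r+3*q:ℤ):ℝ) + 3 := by
      have := (mul_lt_mul_iff_right₀ hp).mp c1; linarith
    have d2 : ((r+3*q:ℤ):ℝ) < (M':ℝ) + 3 := by
      have := (mul_lt_mul_iff_right₀ hp).mp c2; linarith
    have e1 : M' < (r+3*q) + 3 := by exact_mod_cast d1
    have e2 : (r+3*q) < M' + 3 := by exact_mod_cast d2
    have hdvd : (3:ℤ) ∣ (M' - (r+3*q)) := by
      rw [show (3:ℤ) = ((3:ℕ):ℤ) from rfl, ← ZMod.intCast_zmod_eq_zero_iff_dvd]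
      push_cast
      rw [hres, hr, show (3:ZMod 3) = 0 by decide]
      ring
    omega

lemma Ico_dichotomy {c c' : ℝ} {k k' : ℤ} (hk : k ≤ k') (q : ℤ) (h : c - c' = 2^k * q) :
    (Ico c (c + (2:ℝ)^k) ⊆ Ico c' (c' + 2^k')) ∨
      (Ico c (c + (2:ℝ)^k) ∩ Ico c' (c' + 2^k') = ∅) := by
  have hp : (0:ℝ) < 2^k := by positivity
  set d : ℕ := (k' - k).toNat with hd
  have hkd : k' = k + d := by omega
  have hP : (2:ℝ)^k' = 2^k * 2^d := by
    rw [hkd, zpow_add₀ (by norm_num : (2:ℝ) ≠ 0)]; norm_num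
  rcases lt_trichotomy q 0 with hq | hq | hq
  · right
    apply eq_empty_iff_forall_notMem.mpr
    rintro x ⟨⟨hx1, hx2⟩, ⟨hx3, hx4⟩⟩
    have : c + 2^k ≤ c' := by
      have : (q:ℝ) + 1 ≤ 0 := by exact_mod_cast hq; 
      nlinarith
    linarith
  · left
    subst hq
    simp at h
    have : c = c' := by linarith
    subst this
    apply Ico_subset_Ico le_rfl
    nlinarith [one_le_pow₀ (by norm_num : (1:ℝ) ≤ 2) (n := d), hp]
  · by_cases hbig : (2:ℤ)^d ≤ q
    · right
      apply eq_empty_iff_forall_notMem.mpr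
      rintro x ⟨⟨hx1, hx2⟩, ⟨hx3, hx4⟩⟩
      have hr : (2:ℝ)^d ≤ (q:ℝ) := by exact_mod_cast hbig
      have : c' + 2^k' ≤ c := by rw [hP]; nlinarith
      linarith
    · left
      push_neg at hbig
      have hq1 : (q:ℝ) + 1 ≤ (2:ℝ)^d := by
        have : q + 1 ≤ (2:ℤ)^d := by omega
        exact_mod_cast this
      have hq0 : (0:ℝ) ≤ (q:ℝ) := by exact_mod_cast hq.le
      apply Ico_subset_Ico
      · nlinarith
      · rw [hP]; nlinarith
  


lemma oneD_cover (k : ℤ) (u : ℝ) :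
    ∃ ρ : ZMod 3, ∀ M : ℤ, (M : ZMod 3) = ρ →
      (2:ℝ)^(k+3) * M / 3 ≤ u → u < (2:ℝ)^(k+3) * M / 3 + 2^(k+3) →
      (2:ℝ)^(k+3) * M / 3 ≤ u - 2^k ∧ u + 2^k ≤ (2:ℝ)^(k+3) * M / 3 + 2^(k+3) := by
  have hp : (0:ℝ) < 2^k := by positivity
  set p : ℝ := (2:ℝ)^k with hpdef
  have hP : (2:ℝ)^(k+3) = 8 * p := by
    rw [zpow_add₀ (by norm_num : (2:ℝ) ≠ 0), show (2:ℝ)^(3:ℤ) = 8 by norm_num]; ring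
  set y : ℝ := 3*(u+p)/(8*p) with hy
  have hey : y * (8*p) = 3*(u+p) := by
    rw [hy, div_mul_cancel₀]; positivity
  set Mb : ℤ := ⌊y⌋ with hMb
  refine ⟨((Mb + 1 : ℤ) : ZMod 3), ?_⟩
  intro M hres h1 h2
  rw [hP] at h1 h2 ⊢
  have h1' : 8*p*(M:ℝ) ≤ 3*u := by linarith
  have h2' : 3*u < 8*p*(M:ℝ) + 3*(8*p) := by linarith
  have hdvd : (3:ℤ) ∣ (M - (Mb+1)) := by
    rw [show (3:ℤ) = ((3:ℕ):ℤ) from rfl, ← ZMod.intCast_zmod_eq_zero_iff_dvd]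
    push_cast
    push_cast at hres
    rw [hres]; ring
  have hMb_le : (Mb:ℝ) ≤ y := Int.floor_le y
  have hMb_gt : y < Mb + 1 := Int.lt_floor_add_one y
  constructor
  · by_contra hcon
    push_neg at hcon
    -- u - p < 8p*M/3 ≤ u  ⇒ M = Mb, contradiction with hdvd
    have hub : (M:ℝ) ≤ y := by
      have : 8*p*(M:ℝ) ≤ 3*(u+p) := by linarith
      rw [← hey] at this
      nlinarith
    have hlb : y - 3/4 < (M:ℝ) := by
      have : 3*(u - p) < 8*p*(M:ℝ) := by linarith
      nlinarith [hey]
    have : M = Mb := by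
      have u1 : M ≤ Mb := Int.le_floor.mpr hub
      have u2 : (Mb:ℝ) - 1 < (M:ℝ) := by linarith
      have u2' : Mb - 1 < M := by exact_mod_cast u2
      omega
    omega
  · by_contra hcon
    push_neg at hcon
    -- 8p*(M+3)/3 < u + p and u < 8p(M+3)/3 ⇒ M+3 = Mb
    have hub : ((M+3:ℤ):ℝ) ≤ y := by
      have : 8*p*((M:ℝ)+3) < 3*(u+p) := by linarith
      rw [← hey] at this
      push_cast
      nlinarith
    have hlb : y - 3/4 < ((M+3:ℤ):ℝ) := by
      have : 3*u < 8*p*((M:ℝ)+3) := by linarith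
      push_cast
      nlinarith [hey]
    have : M + 3 = Mb := by
      have u1 : M + 3 ≤ Mb := Int.le_floor.mpr hub
      have u2 : (Mb:ℝ) - 1 < ((M+3:ℤ):ℝ) := by linarith
      have u2' : Mb - 1 < M + 3 := by exact_mod_cast u2
      omega
    omega

def gridCubes (n : ℕ) (τ : Fin n → ZMod 3) : Set (Rn n × ℝ) :=
  {c | ∃ (k : ℤ) (M : Fin n → ℤ), c.2 = (2:ℝ)^k ∧
    (∀ j, (M j : ZMod 3) = ((eps k : ℤ) : ZMod 3) * τ j) ∧
    (∀ j, c.1 j = (2:ℝ)^k * M j / 3)}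

lemma grid_corner_dvd {n : ℕ} (τ : Fin n → ZMod 3) {k k' : ℤ} (hk : k ≤ k')
    {M M' : ℤ} {j : Fin n} (hM : (M : ZMod 3) = ((eps k : ℤ) : ZMod 3) * τ j)
    (hM' : (M' : ZMod 3) = ((eps k' : ℤ) : ZMod 3) * τ j) :
    ∃ q : ℤ, (2:ℝ)^k * M / 3 - (2:ℝ)^k' * M' / 3 = 2^k * q := by
  set d : ℕ := (k' - k).toNat with hd
  have hkd : k' = k + (d:ℤ) := by omega
  have hzero : ((M - 2^d * M' : ℤ) : ZMod 3) = 0 := by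
    push_cast
    rw [hM, hM', two_pow_cast_zmod d, hkd, eps_add]
    push_cast
    have h1 : ((eps (d:ℤ) : ℤ) : ZMod 3) * ((eps (d:ℤ) : ℤ) : ZMod 3) = 1 := by
      rw [← Int.cast_mul, eps_mul_self]; norm_num
    linear_combination (-(((eps k : ℤ) : ZMod 3)) * τ j) * h1
  have hdvd : (3:ℤ) ∣ (M - 2^d * M') := by
    rwa [show (3:ℤ) = ((3:ℕ):ℤ) from rfl, ← ZMod.intCast_zmod_eq_zero_iff_dvd]
  obtain ⟨q, hq⟩ := hdvd
  refine ⟨q, ?_⟩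
  have hP : (2:ℝ)^k' = 2^k * 2^d := by
    rw [hkd, zpow_add₀ (by norm_num : (2:ℝ) ≠ 0), zpow_natCast]
  rw [hP]
  have hr : ((M:ℝ) - 2^d * M') = 3*q := by exact_mod_cast congrArg (fun z : ℤ => (z:ℝ)) hq
  calc (2:ℝ)^k * M / 3 - 2^k * 2^d * M' / 3 = 2^k * (((M:ℝ) - 2^d*M')/3) := by ring
    _ = 2^k * q := by rw [hr]; ring

lemma grid_nested_aux {n : ℕ} (τ : Fin n → ZMod 3) {k k' : ℤ} (hk : k ≤ k')
    {a a' : Rn n} {M M' : Fin n → ℤ}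
    (hM : ∀ j, (M j : ZMod 3) = ((eps k : ℤ) : ZMod 3) * τ j)
    (hM' : ∀ j, (M' j : ZMod 3) = ((eps k' : ℤ) : ZMod 3) * τ j)
    (ha : ∀ j, a j = (2:ℝ)^k * M j / 3) (ha' : ∀ j, a' j = (2:ℝ)^k' * M' j / 3) :
    cube a ((2:ℝ)^k) ⊆ cube a' ((2:ℝ)^k') ∨ cube a ((2:ℝ)^k) ∩ cube a' ((2:ℝ)^k') = ∅ := by
  have dich : ∀ j, (Ico (a j) (a j + (2:ℝ)^k) ⊆ Ico (a' j) (a' j + (2:ℝ)^k')) ∨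
      (Ico (a j) (a j + (2:ℝ)^k) ∩ Ico (a' j) (a' j + (2:ℝ)^k') = ∅) := by
    intro j
    obtain ⟨q, hq⟩ := grid_corner_dvd τ hk (hM j) (hM' j)
    exact Ico_dichotomy (c := a j) (c' := a' j) hk q (by rw [ha j, ha' j]; exact hq)
  by_cases hall : ∀ j, Ico (a j) (a j + (2:ℝ)^k) ⊆ Ico (a' j) (a' j + (2:ℝ)^k')
  · left
    intro x hx j
    have hxj : x j ∈ Ico (a j) (a j + (2:ℝ)^k) := ⟨(hx j).1, (hx j).2⟩
    exact ⟨(hall j hxj).1, (hall j hxj).2⟩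
  · right
    push_neg at hall
    obtain ⟨j, hj⟩ := hall
    have hdisj := (dich j).resolve_left hj
    apply eq_empty_iff_forall_notMem.mpr
    rintro x ⟨hx1, hx2⟩
    have : x j ∈ Ico (a j) (a j + (2:ℝ)^k) ∩ Ico (a' j) (a' j + (2:ℝ)^k') :=
      ⟨⟨(hx1 j).1, (hx1 j).2⟩, ⟨(hx2 j).1, (hx2 j).2⟩⟩
    rw [hdisj] at this
    exact this

def gridOf (n : ℕ) (τ : Fin n → ZMod 3) : DyadicGrid n where
  cubes := gridCubes n τ
  side_pow := by rintro c ⟨k, M, hk, -, -⟩; exact ⟨k, hk⟩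
  nested := by
    rintro c ⟨k, M, hs, hres, hcor⟩ c' ⟨k', M', hs', hres', hcor'⟩
    rw [hs, hs']
    rcases le_total k k' with hk | hk
    · rcases grid_nested_aux τ hk hres hres' hcor hcor' with h | h
      · exact Or.inl (inter_eq_left.mpr h)
      · exact Or.inr (Or.inr h)
    · rcases grid_nested_aux τ hk hres' hres hcor' hcor with h | h
      · exact Or.inr (Or.inl (inter_eq_right.mpr h))
      · exact Or.inr (Or.inr (by rw [inter_comm]; exact h))
  partition := by
    intro k x
    have hchoice : ∀ j : Fin n, ∃! M : ℤ, ((M : ZMod 3) = ((eps k : ℤ) : ZMod 3) * τ j ∧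
        (2:ℝ)^k * M / 3 ≤ x j ∧ x j < (2:ℝ)^k * M / 3 + 2^k) :=
      fun j => oneD_partition k _ (x j)
    choose M hM hMuniq using hchoice
    refine ⟨(WithLp.toLp 2 (fun j => (2:ℝ)^k * M j / 3 : Fin n → ℝ) , (2:ℝ)^k), 
      ⟨⟨k, M, rfl, fun j => (hM j).1, fun j => rfl⟩, rfl, fun j => ⟨(hM j).2.1, (hM j).2.2⟩⟩, ?_⟩
    rintro ⟨a', h'⟩ ⟨⟨k₁, M₁, hs₁, hres₁, hcor₁⟩, hs₂, hx⟩
    simp only at hs₁ hs₂ hcor₁ hx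
    have hkk : k₁ = k := zpow_two_inj (by rw [← hs₁, hs₂])
    subst hkk
    have hMeq : ∀ j, M₁ j = M j := by
      intro j
      apply hMuniq j
      refine ⟨hres₁ j, ?_, ?_⟩
      · rw [← hcor₁ j]; exact (hx j).1
      · rw [← hcor₁ j]; have := (hx j).2; rwa [hs₂] at this
    have : a' = WithLp.toLp 2 (fun j => (2:ℝ)^k₁ * M j / 3 : Fin n → ℝ) := by
      ext j
      rw [hcor₁ j, hMeq j]
    rw [Prod.ext_iff]
    exact ⟨this, hs₂⟩

lemma cube_eq_preim {n : ℕ} (a : Rn n) (h : ℝ) :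
    cube a h = (MeasurableEquiv.toLp 2 (Fin n → ℝ)).symm ⁻¹'
      (Set.univ.pi fun j => Ico (a j) (a j + h)) := by
  ext x
  simp [cube, Set.mem_pi]

lemma cube_volume {n : ℕ} (a : Rn n) (h : ℝ) :
    volume (cube a h) = ENNReal.ofReal h ^ n := by
  rw [cube_eq_preim]
  rw [(EuclideanSpace.volume_preserving_symm_measurableEquiv_toLp (Fin n)).measure_preimage
    ((MeasurableSet.univ_pi fun j => measurableSet_Ico).nullMeasurableSet)]
  rw [volume_pi_pi]
  simp [Real.volume_Ico]

lemma cube_measurable {n : ℕ} (a : Rn n) (h : ℝ) : MeasurableSet (cube a h) := by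
  rw [cube_eq_preim]
  exact (MeasurableEquiv.toLp 2 (Fin n → ℝ)).symm.measurable
    (MeasurableSet.univ_pi fun j => measurableSet_Ico)

lemma coord_le_norm {n : ℕ} (x : Rn n) (j : Fin n) : |x j| ≤ ‖x‖ := by
  rw [EuclideanSpace.norm_eq]
  rw [show |x j| = Real.sqrt ((x j)^2) from (Real.sqrt_sq_eq_abs _).symm]
  apply Real.sqrt_le_sqrt
  have := Finset.single_le_sum (f := fun i => ‖x i‖^2) (fun i _ => by positivity)
    (Finset.mem_univ j)
  simpa [Real.norm_eq_abs, sq_abs] using this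

lemma ofReal_two_zpow (k : ℤ) : ENNReal.ofReal ((2:ℝ)^k) = (2:ℝ≥0∞)^(k:ℝ) := by
  rw [← Real.rpow_intCast, ← ENNReal.ofReal_rpow_of_pos two_pos]
  norm_num

lemma e2_ne_top (r : ℝ) : (2:ℝ≥0∞) ^ r ≠ ⊤ := by
  simp [ENNReal.rpow_eq_top_iff]

lemma e2_ne_zero (r : ℝ) : (2:ℝ≥0∞) ^ r ≠ 0 := by
  simp [ENNReal.rpow_eq_zero_iff]

lemma e2_mul (r s : ℝ) : (2:ℝ≥0∞) ^ r * (2:ℝ≥0∞) ^ s = (2:ℝ≥0∞) ^ (r + s) :=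
  (ENNReal.rpow_add r s (by norm_num) (by norm_num)).symm

lemma ptwise {E : Type*} [NormedAddCommGroup E] {β : ℝ} (hβ : 0 < β)
    (f : E → ℝ) (x y : E) :
    ENNReal.ofReal (f y) / ENNReal.ofReal (‖x - y‖ ^ β) ≤
      ∑' k : ℤ, (2:ℝ≥0∞)^((1 - (k:ℝ)) * β) *
        (Metric.ball x ((2:ℝ)^k)).indicator (fun z => ENNReal.ofReal (f z)) y := by
  rcases eq_or_ne y x with rfl | hyx
  · rcases eq_or_ne (ENNReal.ofReal (f y)) 0 with hf | hf
    · rw [hf, ENNReal.zero_div]; exact zero_le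
    · refine le_trans le_top (le_of_eq ?_)
      symm
      have hmem : ∀ k : ℤ, y ∈ Metric.ball y ((2:ℝ)^k) := fun k => by
        simp [Metric.mem_ball, zpow_pos (by norm_num : (0:ℝ) < 2) k]
      rw [eq_top_iff]
      calc (⊤:ℝ≥0∞) = ∑' (_ : ℕ), ENNReal.ofReal (f y) :=
            (ENNReal.tsum_const_eq_top_of_ne_zero hf).symm
        _ ≤ ∑' (j : ℕ), (fun k : ℤ => (2:ℝ≥0∞)^((1 - (k:ℝ)) * β) *
              (Metric.ball y ((2:ℝ)^k)).indicator (fun z => ENNReal.ofReal (f z)) y)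
                (-(j:ℤ)) := by
            apply ENNReal.tsum_le_tsum
            intro j
            simp only []
            rw [indicator_of_mem (hmem _)]
            conv_lhs => rw [← one_mul (ENNReal.ofReal (f y))]
            apply mul_le_mul_left
            rw [show (1:ℝ≥0∞) = (2:ℝ≥0∞)^(0:ℝ) by rw [ENNReal.rpow_zero]]
            apply ENNReal.rpow_le_rpow_of_exponent_le (by norm_num)
            push_cast
            nlinarith [hβ]
        _ ≤ _ := ENNReal.tsum_comp_le_tsum_of_injective
            (fun a b h => Nat.cast_injective (neg_injective h) : Function.Injective (fun j : ℕ => -(j:ℤ))) _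
  · have hr : 0 < ‖x - y‖ := by
      rw [norm_pos_iff, sub_ne_zero]; exact (Ne.symm hyx)
    set r := ‖x - y‖ with hrdef
    set k₀ : ℤ := ⌊Real.logb 2 r⌋ + 1 with hk₀
    have hlog1 : Real.logb 2 r < (k₀:ℝ) := by
      rw [hk₀]
      push_cast
      linarith [Int.lt_floor_add_one (Real.logb 2 r)]
    have hlog2 : ((k₀:ℝ) - 1) ≤ Real.logb 2 r := by
      rw [hk₀]
      push_cast
      linarith [Int.floor_le (Real.logb 2 r)]
    have hr1 : r < (2:ℝ)^k₀ := by
      calc r = (2:ℝ) ^ (Real.logb 2 r) := (Real.rpow_logb two_pos (by norm_num) hr).symm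
        _ < (2:ℝ) ^ ((k₀:ℝ)) := by
            apply Real.rpow_lt_rpow_of_exponent_lt (by norm_num) hlog1
        _ = (2:ℝ)^k₀ := by rw [Real.rpow_intCast]
    have hr2 : (2:ℝ)^(k₀-1) ≤ r := by
      calc (2:ℝ)^(k₀-1) = (2:ℝ) ^ (((k₀-1:ℤ)):ℝ) := by rw [Real.rpow_intCast]
        _ ≤ (2:ℝ) ^ (Real.logb 2 r) := by
            apply Real.rpow_le_rpow_of_exponent_le (by norm_num)
            push_cast; linarith
        _ = r := Real.rpow_logb two_pos (by norm_num) hr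
    have hmem : y ∈ Metric.ball x ((2:ℝ)^k₀) := by
      rw [Metric.mem_ball, dist_eq_norm, norm_sub_rev]; exact hr1
    have hinv : (ENNReal.ofReal (r ^ β))⁻¹ ≤ (2:ℝ≥0∞)^((1 - (k₀:ℝ)) * β) := by
      have h1 : (2:ℝ≥0∞)^(((k₀ - 1:ℤ):ℝ) * β) ≤ ENNReal.ofReal (r ^ β) := by
        calc (2:ℝ≥0∞)^(((k₀ - 1:ℤ):ℝ) * β) = ((2:ℝ≥0∞)^((k₀-1:ℤ):ℝ))^β := by
              rw [← ENNReal.rpow_mul]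
          _ = (ENNReal.ofReal ((2:ℝ)^(k₀-1)))^β := by rw [ofReal_two_zpow]
          _ ≤ (ENNReal.ofReal r)^β :=
              ENNReal.rpow_le_rpow (ENNReal.ofReal_le_ofReal hr2) hβ.le
          _ = ENNReal.ofReal (r^β) := ENNReal.ofReal_rpow_of_pos hr
      calc (ENNReal.ofReal (r ^ β))⁻¹ ≤ ((2:ℝ≥0∞)^(((k₀ - 1:ℤ):ℝ) * β))⁻¹ :=
            ENNReal.inv_le_inv.mpr h1
        _ = (2:ℝ≥0∞)^((1 - (k₀:ℝ)) * β) := by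
            rw [← ENNReal.rpow_neg]; congr 1; push_cast; ring
    calc ENNReal.ofReal (f y) / ENNReal.ofReal (r ^ β)
        = ENNReal.ofReal (f y) * (ENNReal.ofReal (r ^ β))⁻¹ := div_eq_mul_inv _ _
      _ ≤ ENNReal.ofReal (f y) * (2:ℝ≥0∞)^((1 - (k₀:ℝ)) * β) := mul_le_mul_right hinv _
      _ = (2:ℝ≥0∞)^((1 - (k₀:ℝ)) * β) *
            (Metric.ball x ((2:ℝ)^k₀)).indicator (fun z => ENNReal.ofReal (f z)) y := by
          rw [indicator_of_mem hmem, mul_comm]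
      _ ≤ _ := ENNReal.le_tsum k₀



def DD (n : ℕ) : Fin (3^n) → DyadicGrid n := fun i =>
  gridOf n (fun j => (((finFunctionFinEquiv.symm i) j : ℕ) : ZMod 3))

lemma DD_cubes (n : ℕ) (i : Fin (3^n)) :
    (DD n i).cubes = gridCubes n (fun j => (((finFunctionFinEquiv.symm i) j : ℕ) : ZMod 3)) :=
  rfl

lemma DD_surj (n : ℕ) (τ : Fin n → ZMod 3) :
    ∃ i : Fin (3^n), ∀ j, (((finFunctionFinEquiv.symm i) j : ℕ) : ZMod 3) = τ j := by
  refine ⟨finFunctionFinEquiv (fun j => ⟨(τ j).val, ZMod.val_lt _⟩), fun j => ?_⟩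
  rw [Equiv.symm_apply_apply]
  simp [ZMod.natCast_val, ZMod.cast_id]

lemma grid_cover (n : ℕ) (x : Rn n) (k : ℤ) :
    ∃ τ : Fin n → ZMod 3, ∀ c : Rn n × ℝ, c ∈ gridCubes n τ → c.2 = (2:ℝ)^(k+3) →
      x ∈ cube c.1 c.2 → Metric.ball x ((2:ℝ)^k) ⊆ cube c.1 c.2 := by
  choose ρ hρ using fun j => oneD_cover k (x j)
  refine ⟨fun j => ((eps (k+3) : ℤ) : ZMod 3) * ρ j, ?_⟩
  rintro ⟨a, h⟩ ⟨k₁, M, hs, hres, hcor⟩ hk hx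
  simp only at hs hk hcor hx ⊢
  have hk₁ : k₁ = k + 3 := zpow_two_inj (by rw [← hs, hk])
  subst hk₁
  have hres' : ∀ j, (M j : ZMod 3) = ρ j := by
    intro j
    rw [hres j, ← mul_assoc, ← Int.cast_mul, eps_mul_self, Int.cast_one, one_mul]
  have hb : ∀ j, a j ≤ x j - 2^k ∧ x j + 2^k ≤ a j + 2^(k+3) := by
    intro j
    have h1 := (hx j).1
    have h2 := (hx j).2
    rw [hk] at h2
    rw [hcor j] at h1 h2
    have := hρ j (M j) (hres' j) h1 h2
    rw [hcor j]
    exact this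
  intro y hy j
  have hyj : |(y - x) j| ≤ ‖y - x‖ := coord_le_norm (y - x) j
  have hsub : (y - x) j = y j - x j := rfl
  have hdist : ‖y - x‖ < 2^k := by
    rw [← dist_eq_norm]; exact hy
  rw [hsub] at hyj
  have habs := abs_lt.mp (lt_of_le_of_lt hyj hdist)
  rw [hk]
  constructor
  · linarith [(hb j).1]
  · linarith [(hb j).2]

lemma step1 {n : ℕ} {α : ℝ} (hβ : 0 < (n:ℝ) - α) (f : Rn n → ℝ) (hf : Measurable f)
    (x : Rn n) :
    fracIntNN α f x ≤ ∑' k : ℤ, (2:ℝ≥0∞)^((1 - (k:ℝ)) * ((n:ℝ) - α)) *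
      ∫⁻ y in Metric.ball x ((2:ℝ)^k), ENNReal.ofReal (f y) := by
  have hmeas : ∀ k : ℤ, Measurable fun y : Rn n =>
      (2:ℝ≥0∞)^((1 - (k:ℝ)) * ((n:ℝ) - α)) *
        (Metric.ball x ((2:ℝ)^k)).indicator (fun z => ENNReal.ofReal (f z)) y :=
    fun k => measurable_const.mul ((hf.ennreal_ofReal).indicator Metric.isOpen_ball.measurableSet)
  calc fracIntNN α f x
      ≤ ∫⁻ y, ∑' k : ℤ, (2:ℝ≥0∞)^((1 - (k:ℝ)) * ((n:ℝ) - α)) *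
          (Metric.ball x ((2:ℝ)^k)).indicator (fun z => ENNReal.ofReal (f z)) y :=
        lintegral_mono (fun y => ptwise hβ f x y)
    _ = ∑' k : ℤ, ∫⁻ y, (2:ℝ≥0∞)^((1 - (k:ℝ)) * ((n:ℝ) - α)) *
          (Metric.ball x ((2:ℝ)^k)).indicator (fun z => ENNReal.ofReal (f z)) y :=
        lintegral_tsum (fun k => (hmeas k).aemeasurable)
    _ = ∑' k : ℤ, (2:ℝ≥0∞)^((1 - (k:ℝ)) * ((n:ℝ) - α)) *
          ∫⁻ y in Metric.ball x ((2:ℝ)^k), ENNReal.ofReal (f y) := by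
        congr 1
        funext k
        rw [lintegral_const_mul _ ((hf.ennreal_ofReal).indicator
          Metric.isOpen_ball.measurableSet),
          lintegral_indicator Metric.isOpen_ball.measurableSet]

end AuxDyadic

theorem pointwise_dyadic_domination (n : ℕ) (hn : 0 < n) :
    ∃ N : ℕ, 0 < N ∧ ∃ D : Fin N → DyadicGrid n,
      ∀ α : ℝ, 0 < α → α < n →
        ∃ C : ℝ≥0∞, C ≠ ∞ ∧
          ∀ f : Rn n → ℝ, Measurable f → (∀ x, 0 ≤ f x) →
            ∀ x : Rn n, fracIntNN α f x ≤ C * ⨆ i : Fin N, sumIalpha α (D i).cubes f x := by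
  refine ⟨3^n, pow_pos (by norm_num) n, DD n, ?_⟩
  intro α hα hαn
  have hβ : 0 < (n:ℝ) - α := by linarith
  set β : ℝ := (n:ℝ) - α with hβdef
  refine ⟨((3:ℝ≥0∞)^n * (2:ℝ≥0∞)^(4*β)), by
    exact ENNReal.mul_ne_top (by simp) (e2_ne_top _), ?_⟩
  intro f hf hf0 x
  have hpart := fun (i : Fin (3^n)) (k : ℤ) => ((DD n i).partition (k+3) x).exists
  choose Q hQmem hQside hQx using hpart
  set T : Fin (3^n) → ℤ → ℝ≥0∞ := fun i k =>
    volume (cube (Q i k).1 (Q i k).2) ^ (α/(n:ℝ)) *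
      eavg (cube (Q i k).1 (Q i k).2) (fun y => ENNReal.ofReal (f y)) with hT
  have hvol : ∀ i k, volume (cube (Q i k).1 (Q i k).2)
      = (2:ℝ≥0∞)^((((k+3:ℤ)):ℝ) * n) := by
    intro i k
    rw [hQside i k, cube_volume, ofReal_two_zpow, ← ENNReal.rpow_natCast, ← ENNReal.rpow_mul]
  have hn' : ((n:ℝ)) ≠ 0 := by positivity
  have hkey : ∀ k : ℤ, (2:ℝ≥0∞)^((1-(k:ℝ))*β) *
      ∫⁻ y in Metric.ball x ((2:ℝ)^k), ENNReal.ofReal (f y)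
      ≤ ∑ i : Fin (3^n), (2:ℝ≥0∞)^(4*β) * T i k := by
    intro k
    obtain ⟨τ, hτ⟩ := grid_cover n x k
    obtain ⟨i₀, hi₀⟩ := DD_surj n τ
    have hgrid : (DD n i₀).cubes = gridCubes n τ := by
      rw [DD_cubes]
      exact congrArg (gridCubes n) (funext hi₀)
    have hsub : Metric.ball x ((2:ℝ)^k) ⊆ cube (Q i₀ k).1 (Q i₀ k).2 :=
      hτ _ (by rw [← hgrid]; exact hQmem i₀ k) (hQside i₀ k) (hQx i₀ k)
    have hvne : volume (cube (Q i₀ k).1 (Q i₀ k).2) ≠ 0 := by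
      rw [hvol]; exact e2_ne_zero _
    have hvnt : volume (cube (Q i₀ k).1 (Q i₀ k).2) ≠ ⊤ := by
      rw [hvol]; exact e2_ne_top _
    have hint : ∫⁻ y in Metric.ball x ((2:ℝ)^k), ENNReal.ofReal (f y)
        ≤ volume (cube (Q i₀ k).1 (Q i₀ k).2) *
          eavg (cube (Q i₀ k).1 (Q i₀ k).2) (fun y => ENNReal.ofReal (f y)) := by
      rw [eavg, ← mul_assoc, ENNReal.mul_inv_cancel hvne hvnt, one_mul]
      exact lintegral_mono_set hsub
    calc (2:ℝ≥0∞)^((1-(k:ℝ))*β) * ∫⁻ y in Metric.ball x ((2:ℝ)^k), ENNReal.ofReal (f y)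
        ≤ (2:ℝ≥0∞)^((1-(k:ℝ))*β) * (volume (cube (Q i₀ k).1 (Q i₀ k).2) *
            eavg (cube (Q i₀ k).1 (Q i₀ k).2) (fun y => ENNReal.ofReal (f y))) :=
          mul_le_mul_right hint _
      _ = (2:ℝ≥0∞)^(4*β) * T i₀ k := by
          rw [hT]
          simp only [hvol i₀ k]
          rw [← ENNReal.rpow_mul, ← mul_assoc, ← mul_assoc, e2_mul, e2_mul]
          congr 2
          rw [hβdef]
          field_simp
          push_cast
          ring
      _ ≤ ∑ i : Fin (3^n), (2:ℝ≥0∞)^(4*β) * T i k :=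
          Finset.single_le_sum (f := fun i => (2:ℝ≥0∞)^(4*β) * T i k)
            (fun i _ => zero_le) (Finset.mem_univ i₀)
  have hTsum : ∀ i, ∑' k : ℤ, T i k ≤ sumIalpha α ((DD n i).cubes) f x := by
    intro i
    have hinj : Function.Injective
        (fun k : ℤ => (⟨Q i k, hQmem i k⟩ : ((DD n i).cubes))) := by
      intro k k' hEq
      have h2 : (Q i k).2 = (Q i k').2 := by
        rw [Subtype.mk.injEq] at hEq
        rw [hEq]
      rw [hQside i k, hQside i k'] at h2
      have := zpow_two_inj h2
      omega
    have hle := ENNReal.tsum_comp_le_tsum_of_injective hinj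
      (fun c : ((DD n i).cubes) => (cube (c:Rn n × ℝ).1 (c:Rn n × ℝ).2).indicator
        (fun _ => volume (cube (c:Rn n × ℝ).1 (c:Rn n × ℝ).2) ^ (α/(n:ℝ)) *
          eavg (cube (c:Rn n × ℝ).1 (c:Rn n × ℝ).2) fun y => ENNReal.ofReal (f y)) x)
    rw [sumIalpha]
    refine le_trans (le_of_eq ?_) hle
    congr 1
    funext k
    simp only []
    rw [indicator_of_mem (hQx i k)]
  calc fracIntNN α f x
      ≤ ∑' k : ℤ, (2:ℝ≥0∞)^((1 - (k:ℝ)) * β) *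
          ∫⁻ y in Metric.ball x ((2:ℝ)^k), ENNReal.ofReal (f y) := step1 hβ f hf x
    _ ≤ ∑' k : ℤ, ∑ i : Fin (3^n), (2:ℝ≥0∞)^(4*β) * T i k := ENNReal.tsum_le_tsum hkey
    _ = ∑ i : Fin (3^n), ∑' k : ℤ, (2:ℝ≥0∞)^(4*β) * T i k :=
        Summable.tsum_finsetSum (fun i _ => ENNReal.summable)
    _ = ∑ i : Fin (3^n), (2:ℝ≥0∞)^(4*β) * ∑' k : ℤ, T i k := by
        congr 1
        funext i
        rw [ENNReal.tsum_mul_left]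
    _ ≤ ∑ i : Fin (3^n), (2:ℝ≥0∞)^(4*β) *
          (⨆ i' : Fin (3^n), sumIalpha α ((DD n i').cubes) f x) := by
        apply Finset.sum_le_sum
        intro i _
        exact mul_le_mul_right (le_trans (hTsum i)
          (le_iSup (fun i' => sumIalpha α ((DD n i').cubes) f x) i)) _
    _ = (3:ℝ≥0∞)^n * (2:ℝ≥0∞)^(4*β) *
          (⨆ i : Fin (3^n), sumIalpha α ((DD n i).cubes) f x) := by
        rw [Finset.sum_const, Finset.card_univ, Fintype.card_fin, nsmul_eq_mul, ← mul_assoc]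
        congr 1
        push_cast
        ring
end
end

section
/- There exist a finite collection D₁,…,D_N of dyadic grids in ℝⁿ (with N depending only on n) and a constant C = C(n,α) such that for every 0<α<n, every non-negative measurable function f, and every b ∈ BMO, |[b,I_α]f(x)| ≤ C sup_{1≤i≤N} C_b^{D_i} f(x) for all x ∈ ℝⁿ. -/
open MeasureTheory ENNReal Set Filter

noncomputable section

namespace PfAux

open scoped Classical

/-- sign `(-1)^k`. -/
def eps (k : ℤ) : ℝ := (-1 : ℝ) ^ k

lemma eps_one_or_neg_one (k : ℤ) : eps k = 1 ∨ eps k = -1 := by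
  rcases Int.even_or_odd k with h | h
  · left; exact h.neg_one_zpow
  · right; exact h.neg_one_zpow

lemma eps_succ (k : ℤ) : eps (k + 1) = -eps k := by
  unfold eps
  rw [zpow_add_one₀ (by norm_num : (-1:ℝ) ≠ 0)]
  ring

def corner (n : ℕ) (t : Fin n → ℝ) (k : ℤ) (m : Fin n → ℤ) : Rn n :=
  WithLp.toLp 2 (fun i => (2:ℝ)^k * ((m i : ℝ) + eps k * t i))

lemma corner_apply (n : ℕ) (t : Fin n → ℝ) (k : ℤ) (m : Fin n → ℤ) (i : Fin n) :
    corner n t k m i = (2:ℝ)^k * ((m i : ℝ) + eps k * t i) := rfl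

/-- lattice points at scale j are lattice points at scale k, for k ≤ j. -/
lemma lattice_mono {t : ℝ} {z : ℤ} (ht : 3 * t = z) {k : ℤ} :
    ∀ j, k ≤ j → ∀ M : ℤ, ∃ M₂ : ℤ,
      (2:ℝ)^j * ((M : ℝ) + eps j * t) = (2:ℝ)^k * ((M₂ : ℝ) + eps k * t) := by
  refine Int.le_induction (fun M => ⟨M, rfl⟩) ?_
  intro j hj IH M
  have hw : ∃ w : ℤ, (w : ℝ) = 3 * (eps j * t) := by
    rcases eps_one_or_neg_one j with h | h
    · exact ⟨z, by rw [h]; push_cast [← ht]; ring⟩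
    · exact ⟨-z, by rw [h]; push_cast [← ht]; ring⟩
  obtain ⟨w, hwe⟩ := hw
  obtain ⟨M₂, hM₂⟩ := IH (2*M - w)
  refine ⟨M₂, ?_⟩
  rw [← hM₂]
  have h2 : (2:ℝ)^(j+1) = 2^j * 2 := by
    rw [zpow_add_one₀ (by norm_num : (2:ℝ) ≠ 0)]
  rw [h2, eps_succ]
  push_cast
  linear_combination (2:ℝ)^j * hwe

/-- The cubes of the shifted dyadic grid with shift data `s : Fin n → Fin 3`. -/
def gridSet (n : ℕ) (s : Fin n → Fin 3) : Set (Rn n × ℝ) :=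
  Set.range (fun p : ℤ × (Fin n → ℤ) =>
    (corner n (fun i => (s i : ℝ)/3) p.1 p.2, (2:ℝ)^p.1))

lemma gridSet_countable (n : ℕ) (s : Fin n → Fin 3) : (gridSet n s).Countable :=
  Set.countable_range _

lemma two_zpow_inj : Function.Injective (fun k : ℤ => (2:ℝ)^k) := by
  intro a b hab
  exact zpow_right_injective₀ (by norm_num) (by norm_num) hab

lemma mem_cube_iff {n : ℕ} {a : Rn n} {h : ℝ} {x : Rn n} :
    x ∈ cube a h ↔ ∀ i, a i ≤ x i ∧ x i < a i + h := Iff.rfl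

/-- per-coordinate: a scale-k interval is contained in or disjoint from a bigger
lattice interval at scale k. -/
lemma ico_subset_or_disjoint {c h : ℝ} (hh : 0 < h) (m M₂ M₃ : ℤ) :
    (∀ r : ℝ, h*(m + c) ≤ r ∧ r < h*(m + c) + h →
        h*(M₂ + c) ≤ r ∧ r < h*(M₃ + c)) ∨
      (∀ r : ℝ, h*(m + c) ≤ r ∧ r < h*(m + c) + h →
        ¬ (h*(M₂ + c) ≤ r ∧ r < h*(M₃ + c))) := by
  rcases lt_or_ge m M₂ with hm | hm
  · right
    intro r ⟨_, hr2⟩ ⟨hr3, _⟩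
    have : (m:ℝ) + 1 ≤ M₂ := by exact_mod_cast hm
    nlinarith
  rcases lt_or_ge m M₃ with hm' | hm'
  · left
    intro r ⟨hr1, hr2⟩
    have h1 : (M₂:ℝ) ≤ m := by exact_mod_cast hm
    have h2 : (m:ℝ) + 1 ≤ M₃ := by exact_mod_cast hm'
    constructor <;> nlinarith
  · right
    intro r ⟨hr1, _⟩ ⟨_, hr4⟩
    have : (M₃:ℝ) ≤ m := by exact_mod_cast hm'
    nlinarith

lemma shift_int (s : Fin 3) : ∃ z : ℤ, 3 * ((s:ℝ)/3) = z := ⟨s, by field_simp; norm_cast⟩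

/-- the nesting lemma for cubes in a common shifted grid, case k ≤ j. -/
lemma cube_subset_or_disjoint {n : ℕ} (s : Fin n → Fin 3) {k j : ℤ} (hkj : k ≤ j)
    (m M : Fin n → ℤ) :
    cube (corner n (fun i => (s i : ℝ)/3) k m) ((2:ℝ)^k) ⊆
        cube (corner n (fun i => (s i : ℝ)/3) j M) ((2:ℝ)^j) ∨
      cube (corner n (fun i => (s i : ℝ)/3) k m) ((2:ℝ)^k) ∩
        cube (corner n (fun i => (s i : ℝ)/3) j M) ((2:ℝ)^j) = ∅ := by
  set t : Fin n → ℝ := fun i => (s i : ℝ)/3 with ht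
  have hk2 : (0:ℝ) < 2^k := zpow_pos (by norm_num) k
  -- per coordinate, choose lattice representations of the big interval endpoints
  have key : ∀ i : Fin n,
      (∀ r : ℝ, corner n t k m i ≤ r ∧ r < corner n t k m i + 2^k →
          corner n t j M i ≤ r ∧ r < corner n t j M i + 2^j) ∨
        (∀ r : ℝ, corner n t k m i ≤ r ∧ r < corner n t k m i + 2^k →
          ¬ (corner n t j M i ≤ r ∧ r < corner n t j M i + 2^j)) := by
    intro i
    obtain ⟨z, hz⟩ := shift_int (s i)
    obtain ⟨M₂, hM₂⟩ := lattice_mono hz j hkj (M i)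
    obtain ⟨M₃, hM₃⟩ := lattice_mono hz j hkj (M i + 1)
    have hub : corner n t j M i + 2^j = 2^k * ((M₃:ℝ) + eps k * t i) := by
      rw [corner_apply, ← hM₃]
      push_cast
      have : (2:ℝ)^j * ((M i:ℝ) + 1 + eps j * t i)
          = 2^j * ((M i:ℝ) + eps j * t i) + 2^j := by ring
      rw [this]
    have hlb : corner n t j M i = 2^k * ((M₂:ℝ) + eps k * t i) := by
      rw [corner_apply, ← hM₂]
    rcases ico_subset_or_disjoint (c := eps k * t i) hk2 (m i) M₂ M₃ with H | H
    · left
      intro r hr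
      have := H r (by rw [corner_apply] at hr; constructor <;> [exact hr.1; linarith [hr.2]])
      rw [hub, hlb]
      exact ⟨this.1, this.2⟩
    · right
      intro r hr hr2
      refine H r ?_ ?_
      · rw [corner_apply] at hr; exact ⟨hr.1, by linarith [hr.2]⟩
      · rw [hub, hlb] at hr2; exact hr2
  by_cases hd : ∃ i, (∀ r : ℝ, corner n t k m i ≤ r ∧ r < corner n t k m i + 2^k →
      ¬ (corner n t j M i ≤ r ∧ r < corner n t j M i + 2^j))
  · right
    obtain ⟨i, hi⟩ := hd
    ext x
    simp only [Set.mem_inter_iff, Set.mem_empty_iff_false, iff_false, not_and]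
    intro h1 h2
    exact hi (x i) ⟨(h1 i).1, (h1 i).2⟩ ⟨(h2 i).1, (h2 i).2⟩
  · left
    intro x hx i
    rcases key i with H | H
    · exact H (x i) ⟨(hx i).1, (hx i).2⟩
    · exact absurd ⟨i, H⟩ hd

lemma cube_mem_gridSet (n : ℕ) (s : Fin n → Fin 3) (k : ℤ) (m : Fin n → ℤ) :
    (corner n (fun i => (s i : ℝ)/3) k m, (2:ℝ)^k) ∈ gridSet n s :=
  ⟨(k, m), rfl⟩

lemma grid_partition (n : ℕ) (s : Fin n → Fin 3) (k : ℤ) (x : Rn n) :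
    ∃! c, c ∈ gridSet n s ∧ c.2 = (2 : ℝ) ^ k ∧ x ∈ cube c.1 c.2 := by
  set t : Fin n → ℝ := fun i => (s i : ℝ)/3 with htdef
  have hk2 : (0:ℝ) < 2^k := zpow_pos (by norm_num) k
  set m : Fin n → ℤ := fun i => ⌊x i / 2^k - eps k * t i⌋ with hmdef
  refine ⟨(corner n t k m, (2:ℝ)^k), ⟨cube_mem_gridSet n s k m, rfl, ?_⟩, ?_⟩
  · intro i
    dsimp only
    have hfl : (m i : ℝ) ≤ x i / 2^k - eps k * t i := Int.floor_le _
    have hfu : x i / 2^k - eps k * t i < (m i : ℝ) + 1 := Int.lt_floor_add_one _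
    rw [corner_apply]
    constructor
    · have h1 : (m i : ℝ) + eps k * t i ≤ x i / 2^k := by linarith
      calc (2:ℝ)^k * ((m i:ℝ) + eps k * t i) ≤ 2^k * (x i / 2^k) :=
            mul_le_mul_of_nonneg_left h1 hk2.le
        _ = x i := by field_simp
    · have h1 : x i / 2^k < (m i : ℝ) + 1 + eps k * t i := by linarith
      calc x i = 2^k * (x i / 2^k) := by field_simp
        _ < 2^k * ((m i:ℝ) + 1 + eps k * t i) := by
            exact mul_lt_mul_of_pos_left h1 hk2
        _ = 2^k * ((m i:ℝ) + eps k * t i) + 2^k := by ring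
  · rintro c' ⟨⟨⟨k', m'⟩, rfl⟩, hc2, hxc⟩
    dsimp only at hc2 hxc ⊢
    have hkk : k' = k := two_zpow_inj hc2
    subst hkk
    have hm' : m' = m := by
      funext i
      have hx1 := (hxc i).1
      have hx2 := (hxc i).2
      rw [corner_apply] at hx1 hx2
      have hu1 : (m' i : ℝ) ≤ x i / 2^k' - eps k' * t i := by
        rw [le_sub_iff_add_le, le_div_iff₀ hk2]
        calc ((m' i:ℝ) + eps k' * t i) * 2^k' = 2^k' * ((m' i:ℝ) + eps k' * t i) := by ring
          _ ≤ x i := hx1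
      have hu2 : x i / 2^k' - eps k' * t i < (m' i : ℝ) + 1 := by
        rw [sub_lt_iff_lt_add, div_lt_iff₀ hk2]
        calc x i < 2^k' * ((m' i:ℝ) + eps k' * t i) + 2^k' := hx2
          _ = ((m' i:ℝ) + 1 + eps k' * t i) * 2^k' := by ring
      have : ⌊x i / 2^k' - eps k' * t i⌋ = m' i :=
        Int.floor_eq_iff.mpr ⟨hu1, by push_cast; linarith⟩
      rw [hmdef]
      exact this.symm
    rw [hm']

/-- The shifted dyadic grid as a `DyadicGrid`. -/
def grid (n : ℕ) (s : Fin n → Fin 3) : DyadicGrid n where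
  cubes := gridSet n s
  side_pow := by rintro c ⟨⟨k, m⟩, rfl⟩; exact ⟨k, rfl⟩
  nested := by
    rintro c ⟨⟨k, m⟩, rfl⟩ c' ⟨⟨j, M⟩, rfl⟩
    rcases le_total k j with hkj | hjk
    · rcases cube_subset_or_disjoint s hkj m M with H | H
      · exact Or.inl (Set.inter_eq_left.mpr H)
      · exact Or.inr (Or.inr H)
    · rcases cube_subset_or_disjoint s hjk M m with H | H
      · exact Or.inr (Or.inl (Set.inter_eq_right.mpr H))
      · exact Or.inr (Or.inr (by rw [Set.inter_comm]; exact H))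
  partition := grid_partition n s

lemma floor_shift {U V : ℝ} (hUV : U ≤ V) (h3 : V - U < 1/3) {e : ℝ} (he : e = 1 ∨ e = -1) :
    ∃ s : Fin 3, ⌊V - e * ((s:ℝ)/3)⌋ = ⌊U - e * ((s:ℝ)/3)⌋ := by
  by_cases hf : ⌊V⌋ = ⌊U⌋
  · refine ⟨0, ?_⟩
    norm_num [hf]
  · have hle : ⌊U⌋ ≤ ⌊V⌋ := Int.floor_le_floor hUV
    have hlt : ⌊U⌋ < ⌊V⌋ := lt_of_le_of_ne hle (Ne.symm hf)
    have hUf := Int.floor_le U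
    have hUc := Int.lt_floor_add_one U
    have hVf := Int.floor_le V
    have hVc := Int.lt_floor_add_one V
    have h1 : ⌊V⌋ = ⌊U⌋ + 1 := by
      have : ⌊V⌋ < ⌊U⌋ + 2 := by
        apply Int.floor_lt.mpr
        push_cast
        linarith
      omega
    have hcast : ((⌊V⌋:ℝ)) = (⌊U⌋:ℝ) + 1 := by exact_mod_cast h1
    have hUlt : U < (⌊V⌋:ℝ) := by
      have : ((⌊U⌋:ℝ)) + 1 ≤ (⌊V⌋:ℝ) := by exact_mod_cast hlt
      linarith
    have hVlb : (⌊V⌋:ℝ) ≤ V := hVf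
    have hUgt : (⌊V⌋:ℝ) - 1/3 < U := by linarith
    have hVlt : V < (⌊V⌋:ℝ) + 1/3 := by linarith
    refine ⟨1, ?_⟩
    rcases he with rfl | rfl
    · have e1 : ⌊V - 1 * ((1:ℝ)/3)⌋ = ⌊U⌋ := by
        rw [Int.floor_eq_iff]
        constructor <;> push_cast <;> linarith
      have e2 : ⌊U - 1 * ((1:ℝ)/3)⌋ = ⌊U⌋ := by
        rw [Int.floor_eq_iff]
        constructor <;> push_cast <;> linarith
      rw [show ((1 : Fin 3):ℝ) = 1 by norm_num]
      rw [e1, e2]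
    · have e1 : ⌊V - (-1) * ((1:ℝ)/3)⌋ = ⌊V⌋ := by
        rw [Int.floor_eq_iff]
        constructor <;> push_cast <;> linarith
      have e2 : ⌊U - (-1) * ((1:ℝ)/3)⌋ = ⌊V⌋ := by
        rw [Int.floor_eq_iff]
        constructor <;> push_cast <;> linarith
      rw [show ((1 : Fin 3):ℝ) = 1 by norm_num]
      rw [e1, e2]

lemma coord_dist_le {n : ℕ} (x y : Rn n) (i : Fin n) : |x i - y i| ≤ ‖x - y‖ := by
  have h : ‖x - y‖ = Real.sqrt (∑ j, ‖(x - y) j‖^2) := EuclideanSpace.norm_eq _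
  have hsub : (x - y) i = x i - y i := rfl
  rw [h]
  have h1 : |x i - y i| = Real.sqrt (‖(x - y) i‖^2) := by
    rw [Real.sqrt_sq_eq_abs, hsub, Real.norm_eq_abs, abs_abs]
  rw [h1]
  apply Real.sqrt_le_sqrt
  exact Finset.single_le_sum (f := fun j => ‖(x - y) j‖^2) (fun j _ => sq_nonneg _) (Finset.mem_univ i)

lemma exists_good_cube {n : ℕ} (x y : Rn n) (hxy : x ≠ y) :
    ∃ s : Fin n → Fin 3, ∃ k : ℤ, ∃ m : Fin n → ℤ,
      x ∈ cube (corner n (fun i => ((s i):ℝ)/3) k m) ((2:ℝ)^k) ∧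
      y ∈ cube (corner n (fun i => ((s i):ℝ)/3) k m) ((2:ℝ)^k) ∧
      (2:ℝ)^k ≤ 6 * ‖x - y‖ := by
  set d := ‖x - y‖ with hddef
  have hd : 0 < d := by
    rw [hddef]
    exact norm_pos_iff.mpr (sub_ne_zero.mpr hxy)
  obtain ⟨k₀, hk₀⟩ := exists_mem_Ico_zpow (x := 3*d) (y := (2:ℝ)) (by positivity) (by norm_num)
  set k := k₀ + 1 with hkdef
  have hk2 : (0:ℝ) < 2^k := zpow_pos (by norm_num) k
  have hk1 : 3*d < 2^k := by
    have := hk₀.2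
    rw [hkdef]
    exact this
  have hk6 : (2:ℝ)^k ≤ 6*d := by
    have h0 := hk₀.1
    have : (2:ℝ)^k = 2 * 2^k₀ := by
      rw [hkdef, zpow_add_one₀ (by norm_num : (2:ℝ) ≠ 0)]
      ring
    rw [this]
    linarith
  have hcoord : ∀ i : Fin n, ∃ sᵢ : Fin 3, ∃ mᵢ : ℤ,
      2^k*((mᵢ:ℝ) + eps k * ((sᵢ:ℝ)/3)) ≤ min (x i) (y i) ∧
      max (x i) (y i) < 2^k*((mᵢ:ℝ) + eps k * ((sᵢ:ℝ)/3)) + 2^k := by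
    intro i
    set u := min (x i) (y i) with hu
    set v := max (x i) (y i) with hv
    have hle : u ≤ v := min_le_max
    have hlen : v - u ≤ d := by
      have h1 : v - u = |y i - x i| := max_sub_min_eq_abs _ _
      rw [h1, abs_sub_comm]
      exact coord_dist_le x y i
    have hUV : u/2^k ≤ v/2^k := by gcongr
    have h13 : v/2^k - u/2^k < 1/3 := by
      rw [div_sub_div_same, div_lt_iff₀ hk2]
      calc v - u ≤ d := hlen
        _ < 1/3 * 2^k := by linarith
    obtain ⟨sᵢ, hs⟩ := floor_shift hUV h13 (eps_one_or_neg_one k)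
    refine ⟨sᵢ, ⌊u/2^k - eps k * ((sᵢ:ℝ)/3)⌋, ?_, ?_⟩
    · have hfl : (⌊u/2^k - eps k * ((sᵢ:ℝ)/3)⌋:ℝ) ≤ u/2^k - eps k * ((sᵢ:ℝ)/3) :=
        Int.floor_le _
      calc (2:ℝ)^k*((⌊u/2^k - eps k * ((sᵢ:ℝ)/3)⌋:ℝ) + eps k * ((sᵢ:ℝ)/3))
          ≤ 2^k * (u/2^k) := mul_le_mul_of_nonneg_left (by linarith) hk2.le
        _ = u := by field_simp
    · have hfu : v/2^k - eps k * ((sᵢ:ℝ)/3) < (⌊v/2^k - eps k * ((sᵢ:ℝ)/3)⌋:ℝ) + 1 :=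
        Int.lt_floor_add_one _
      rw [hs] at hfu
      calc v = 2^k * (v/2^k) := by field_simp
        _ < 2^k * ((⌊u/2^k - eps k * ((sᵢ:ℝ)/3)⌋:ℝ) + 1 + eps k * ((sᵢ:ℝ)/3)) :=
            mul_lt_mul_of_pos_left (by linarith) hk2
        _ = 2^k*((⌊u/2^k - eps k * ((sᵢ:ℝ)/3)⌋:ℝ) + eps k * ((sᵢ:ℝ)/3)) + 2^k := by ring
  choose s m hm1 hm2 using hcoord
  refine ⟨s, k, m, ?_, ?_, by rw [hddef] at hk6; exact hk6⟩
  · intro i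
    rw [corner_apply]
    exact ⟨le_trans (hm1 i) (min_le_left _ _), lt_of_le_of_lt (le_max_left _ _) (hm2 i)⟩
  · intro i
    rw [corner_apply]
    exact ⟨le_trans (hm1 i) (min_le_right _ _), lt_of_le_of_lt (le_max_right _ _) (hm2 i)⟩

lemma cube_eq_preimage {n : ℕ} (a : Rn n) (h : ℝ) :
    cube a h = (MeasurableEquiv.toLp 2 (Fin n → ℝ)).symm ⁻¹'
      (Set.univ.pi fun i => Set.Ico (a i) (a i + h)) := by
  ext x
  simp only [Set.mem_preimage, Set.mem_pi, Set.mem_univ, forall_true_left, Set.mem_Ico]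
  exact Iff.rfl

lemma cube_measurableSet {n : ℕ} (a : Rn n) (h : ℝ) : MeasurableSet (cube a h) := by
  rw [cube_eq_preimage]
  exact (MeasurableEquiv.toLp 2 (Fin n → ℝ)).symm.measurable
    (MeasurableSet.univ_pi fun i => measurableSet_Ico)

lemma volume_cube {n : ℕ} (a : Rn n) (h : ℝ) :
    volume (cube a h) = ENNReal.ofReal h ^ n := by
  rw [cube_eq_preimage]
  rw [(EuclideanSpace.volume_preserving_symm_measurableEquiv_toLp (Fin n)).measure_preimage
    (MeasurableSet.univ_pi fun i => measurableSet_Ico).nullMeasurableSet]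
  rw [volume_pi_pi]
  simp [Real.volume_Ico]

def termFn {n : ℕ} (α : ℝ) (S : Set (Rn n × ℝ)) (b f : Rn n → ℝ) (x : Rn n) (c : S) :
    Rn n → ℝ≥0∞ :=
  (cube c.1.1 c.1.2).indicator
    (fun y => (if x ∈ cube c.1.1 c.1.2 then
        volume (cube c.1.1 c.1.2) ^ (α/(n:ℝ)) * (volume (cube c.1.1 c.1.2))⁻¹ else 0)
      * ENNReal.ofReal (|b x - b y| * f y))

lemma g_meas {n : ℕ} {b f : Rn n → ℝ} (hb : Measurable b) (hf : Measurable f) (x : Rn n) :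
    Measurable (fun y => ENNReal.ofReal (|b x - b y| * f y)) :=
  ((measurable_const.sub hb).abs.mul hf).ennreal_ofReal

lemma termFn_meas {n : ℕ} (α : ℝ) (S : Set (Rn n × ℝ)) {b f : Rn n → ℝ}
    (hb : Measurable b) (hf : Measurable f) (x : Rn n) (c : S) :
    Measurable (termFn α S b f x c) := by
  unfold termFn
  exact Measurable.indicator (measurable_const.mul (g_meas hb hf x)) (cube_measurableSet _ _)

lemma sumComm_eq_lintegral {n : ℕ} (α : ℝ) (s : Fin n → Fin 3) {b f : Rn n → ℝ}
    (hb : Measurable b) (hf : Measurable f) (x : Rn n) :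
    sumComm α (gridSet n s) b f x
      = ∫⁻ y, ∑' c : (gridSet n s), termFn α (gridSet n s) b f x c y := by
  haveI := (gridSet_countable n s).to_subtype
  rw [lintegral_tsum (fun c => (termFn_meas α _ hb hf x c).aemeasurable)]
  unfold sumComm
  apply tsum_congr
  intro c
  unfold termFn
  rw [lintegral_indicator (cube_measurableSet _ _)]
  rw [Set.indicator_apply]
  split_ifs with hx
  · rw [lintegral_const_mul _ (g_meas hb hf x)]
    unfold eavg
    ring
  · simp

lemma weight_eq {n : ℕ} (hn : 0 < n) (α : ℝ) (a : Rn n) {h : ℝ} (hh : 0 < h) :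
    volume (cube a h) ^ (α/(n:ℝ)) * (volume (cube a h))⁻¹
      = ENNReal.ofReal (h ^ (α - (n:ℝ))) := by
  rw [volume_cube]
  set X := ENNReal.ofReal h with hX
  have hX0 : X ≠ 0 := by
    rw [hX]
    simp [ENNReal.ofReal_eq_zero]
    linarith
  have hXt : X ≠ ⊤ := ENNReal.ofReal_ne_top
  have h1 : X ^ (n:ℕ) = X ^ ((n:ℕ):ℝ) := (ENNReal.rpow_natCast X n).symm
  rw [h1, ← ENNReal.rpow_neg, ← ENNReal.rpow_mul, ← ENNReal.rpow_add _ _ hX0 hXt]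
  rw [show ((n:ℕ):ℝ) * (α/(n:ℝ)) + -((n:ℕ):ℝ) = α - (n:ℝ) by
    have : ((n:ℕ):ℝ) ≠ 0 := Nat.cast_ne_zero.mpr hn.ne'
    field_simp
    ring]
  exact ENNReal.ofReal_rpow_of_pos hh

lemma pointwise_kernel_bound {n : ℕ} (hn : 0 < n) {α : ℝ} (hα : 0 < α) (hαn : α < (n:ℝ))
    {b f : Rn n → ℝ} (hf0 : ∀ z, 0 ≤ f z) (x y : Rn n) :
    ENNReal.ofReal |(b x - b y) * f y / ‖x - y‖ ^ ((n:ℝ) - α)| ≤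
      ENNReal.ofReal (6 ^ ((n:ℝ) - α)) *
        ∑ s : (Fin n → Fin 3), ∑' c : (gridSet n s), termFn α (gridSet n s) b f x c y := by
  by_cases hxy : x = y
  · subst hxy
    simp
  · obtain ⟨s₀, k, m, hxQ, hyQ, h6⟩ := exists_good_cube x y hxy
    set d := ‖x - y‖ with hddef
    have hd : 0 < d := norm_pos_iff.mpr (sub_ne_zero.mpr hxy)
    set h := (2:ℝ)^k with hhdef
    have hh : 0 < h := zpow_pos (by norm_num) k
    have hD : (0:ℝ) < d ^ ((n:ℝ) - α) := Real.rpow_pos_of_pos hd _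
    have lhs_eq : ENNReal.ofReal |(b x - b y) * f y / d ^ ((n:ℝ) - α)|
        = ENNReal.ofReal (d ^ (α - (n:ℝ))) * ENNReal.ofReal (|b x - b y| * f y) := by
      rw [abs_div, abs_mul, abs_of_pos hD, abs_of_nonneg (hf0 y)]
      rw [div_eq_mul_inv, ← Real.rpow_neg hd.le, neg_sub]
      rw [mul_comm]
      rw [ENNReal.ofReal_mul (by positivity)]
    -- scalar inequality
    have hscal : d ^ (α - (n:ℝ)) ≤ 6 ^ ((n:ℝ) - α) * h ^ (α - (n:ℝ)) := by
      have h1 : (6*d) ^ (α - (n:ℝ)) ≤ h ^ (α - (n:ℝ)) :=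
        Real.rpow_le_rpow_of_nonpos hh h6 (by linarith)
      have h2 : (6*d) ^ (α - (n:ℝ)) = 6 ^ (α - (n:ℝ)) * d ^ (α - (n:ℝ)) :=
        Real.mul_rpow (by norm_num) hd.le
      have h3 : (6:ℝ) ^ ((n:ℝ) - α) * 6 ^ (α - (n:ℝ)) = 1 := by
        rw [← Real.rpow_add (by norm_num : (0:ℝ) < 6)]
        norm_num
      have h4 : (0:ℝ) ≤ 6 ^ ((n:ℝ) - α) := (Real.rpow_pos_of_pos (by norm_num) _).le
      calc d ^ (α - (n:ℝ)) = (6 ^ ((n:ℝ) - α) * 6 ^ (α - (n:ℝ))) * d ^ (α - (n:ℝ)) := by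
            rw [h3, one_mul]
        _ = 6 ^ ((n:ℝ) - α) * ((6*d) ^ (α - (n:ℝ))) := by rw [h2]; ring
        _ ≤ 6 ^ ((n:ℝ) - α) * h ^ (α - (n:ℝ)) := by
            exact mul_le_mul_of_nonneg_left h1 h4
    -- single term lower bound for the tsum at s₀
    set c₀ : ↥(gridSet n s₀) :=
      ⟨(corner n (fun i => ((s₀ i):ℝ)/3) k m, h), cube_mem_gridSet n s₀ k m⟩ with hc₀
    have hterm : ENNReal.ofReal (h ^ (α - (n:ℝ))) * ENNReal.ofReal (|b x - b y| * f y)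
        ≤ ∑' c : (gridSet n s₀), termFn α (gridSet n s₀) b f x c y := by
      refine le_trans (le_of_eq ?_) (ENNReal.le_tsum c₀)
      unfold termFn
      rw [hc₀]
      dsimp only
      rw [Set.indicator_of_mem hyQ, if_pos hxQ]
      rw [weight_eq hn α _ hh]
    have hsum : ∑' c : (gridSet n s₀), termFn α (gridSet n s₀) b f x c y
        ≤ ∑ s : (Fin n → Fin 3), ∑' c : (gridSet n s), termFn α (gridSet n s) b f x c y :=
      Finset.single_le_sum (f := fun s => ∑' c : (gridSet n s), termFn α (gridSet n s) b f x c y)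
        (fun _ _ => zero_le) (Finset.mem_univ s₀)
    calc ENNReal.ofReal |(b x - b y) * f y / ‖x - y‖ ^ ((n:ℝ) - α)|
        = ENNReal.ofReal (d ^ (α - (n:ℝ))) * ENNReal.ofReal (|b x - b y| * f y) := lhs_eq
      _ ≤ ENNReal.ofReal (6 ^ ((n:ℝ) - α) * h ^ (α - (n:ℝ))) *
            ENNReal.ofReal (|b x - b y| * f y) := by
          exact mul_le_mul_left (ENNReal.ofReal_le_ofReal hscal) _
      _ = ENNReal.ofReal (6 ^ ((n:ℝ) - α)) *
            (ENNReal.ofReal (h ^ (α - (n:ℝ))) * ENNReal.ofReal (|b x - b y| * f y)) := by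
          rw [ENNReal.ofReal_mul (Real.rpow_pos_of_pos (by norm_num) _).le, mul_assoc]
      _ ≤ ENNReal.ofReal (6 ^ ((n:ℝ) - α)) *
            ∑' c : (gridSet n s₀), termFn α (gridSet n s₀) b f x c y :=
          mul_le_mul_right hterm _
      _ ≤ _ := mul_le_mul_right hsum _

end PfAux

theorem pointwise_dyadic_domination_commutator (n : ℕ) (hn : 0 < n) :
    ∃ N : ℕ, 0 < N ∧ ∃ D : Fin N → DyadicGrid n,
      ∀ α : ℝ, 0 < α → α < n →
        ∃ C : ℝ≥0∞, C ≠ ∞ ∧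
          ∀ f : Rn n → ℝ, Measurable f → (∀ x, 0 ≤ f x) →
            ∀ b : Rn n → ℝ, Measurable b → LocallyIntegrable b volume → bmoNorm b < ∞ →
              ∀ x : Rn n,
                ENNReal.ofReal |commFracInt α b f x| ≤
                  C * ⨆ i : Fin N, sumComm α (D i).cubes b f x := by
  classical
  refine ⟨3^n, by positivity, ?_⟩
  have hcard : Fintype.card (Fin n → Fin 3) = 3^n := by simp
  let e : (Fin n → Fin 3) ≃ Fin (3^n) := Fintype.equivFinOfCardEq hcard
  refine ⟨fun i => PfAux.grid n (e.symm i), ?_⟩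
  intro α hα hαn
  refine ⟨((3^n : ℕ) : ℝ≥0∞) * ENNReal.ofReal (6 ^ ((n:ℝ) - α)), ?_, ?_⟩
  · exact ENNReal.mul_ne_top (by simp) ENNReal.ofReal_ne_top
  intro f hf hf0 b hb _ _ x
  haveI : ∀ s : Fin n → Fin 3, Countable ↑(PfAux.gridSet n s) := fun s =>
    (PfAux.gridSet_countable n s).to_subtype
  have hmeas : ∀ s : Fin n → Fin 3,
      Measurable (fun y => ∑' c : (PfAux.gridSet n s),
        PfAux.termFn α (PfAux.gridSet n s) b f x c y) :=
    fun s => Measurable.ennreal_tsum (fun c => PfAux.termFn_meas α _ hb hf x c)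
  have step1 : ENNReal.ofReal |commFracInt α b f x| ≤
      ∫⁻ y, ENNReal.ofReal |(b x - b y) * f y / ‖x - y‖ ^ ((n:ℝ) - α)| := by
    unfold commFracInt
    rw [← Real.enorm_eq_ofReal_abs]
    refine le_trans (MeasureTheory.enorm_integral_le_lintegral_enorm _) ?_
    refine le_of_eq (lintegral_congr fun y => ?_)
    rw [Real.enorm_eq_ofReal_abs]
  have step2 : (∫⁻ y, ENNReal.ofReal |(b x - b y) * f y / ‖x - y‖ ^ ((n:ℝ) - α)|) ≤
      ∫⁻ y, ENNReal.ofReal (6 ^ ((n:ℝ) - α)) *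
        ∑ s : (Fin n → Fin 3), ∑' c : (PfAux.gridSet n s),
          PfAux.termFn α (PfAux.gridSet n s) b f x c y :=
    lintegral_mono fun y => PfAux.pointwise_kernel_bound hn hα hαn hf0 x y
  have step3 : (∫⁻ y, ENNReal.ofReal (6 ^ ((n:ℝ) - α)) *
        ∑ s : (Fin n → Fin 3), ∑' c : (PfAux.gridSet n s),
          PfAux.termFn α (PfAux.gridSet n s) b f x c y)
      = ENNReal.ofReal (6 ^ ((n:ℝ) - α)) *
        ∑ s : (Fin n → Fin 3), sumComm α (PfAux.gridSet n s) b f x := by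
    rw [lintegral_const_mul _ (Finset.measurable_sum Finset.univ (fun s _ => hmeas s))]
    congr 1
    rw [lintegral_finset_sum _ (fun s _ => hmeas s)]
    exact Finset.sum_congr rfl fun s _ => (PfAux.sumComm_eq_lintegral α s hb hf x).symm
  have step4 : ∑ s : (Fin n → Fin 3), sumComm α (PfAux.gridSet n s) b f x
      ≤ ((3^n : ℕ) : ℝ≥0∞) *
        ⨆ i : Fin (3^n), sumComm α ((PfAux.grid n (e.symm i)).cubes) b f x := by
    have h1 : ∑ s : (Fin n → Fin 3), sumComm α (PfAux.gridSet n s) b f x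
        = ∑ i : Fin (3^n), sumComm α (PfAux.gridSet n (e.symm i)) b f x :=
      Fintype.sum_equiv e _ _ (fun s => by rw [Equiv.symm_apply_apply])
    rw [h1]
    have h2 := Finset.sum_le_card_nsmul Finset.univ
      (fun i : Fin (3^n) => sumComm α (PfAux.gridSet n (e.symm i)) b f x)
      (⨆ i : Fin (3^n), sumComm α ((PfAux.grid n (e.symm i)).cubes) b f x)
      (fun i _ => le_iSup
        (fun i => sumComm α ((PfAux.grid n (e.symm i)).cubes) b f x) i)
    calc ∑ i : Fin (3^n), sumComm α (PfAux.gridSet n (e.symm i)) b f x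
        ≤ Finset.univ.card •
          ⨆ i : Fin (3^n), sumComm α ((PfAux.grid n (e.symm i)).cubes) b f x := h2
      _ = _ := by rw [Finset.card_univ, Fintype.card_fin, nsmul_eq_mul]
  calc ENNReal.ofReal |commFracInt α b f x|
      ≤ ∫⁻ y, ENNReal.ofReal |(b x - b y) * f y / ‖x - y‖ ^ ((n:ℝ) - α)| := step1
    _ ≤ _ := step2
    _ = ENNReal.ofReal (6 ^ ((n:ℝ) - α)) *
        ∑ s : (Fin n → Fin 3), sumComm α (PfAux.gridSet n s) b f x := step3
    _ ≤ ENNReal.ofReal (6 ^ ((n:ℝ) - α)) * (((3^n : ℕ) : ℝ≥0∞) *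
        ⨆ i : Fin (3^n), sumComm α ((PfAux.grid n (e.symm i)).cubes) b f x) :=
      mul_le_mul_right step4 _
    _ = (((3^n : ℕ) : ℝ≥0∞) * ENNReal.ofReal (6 ^ ((n:ℝ) - α))) *
        ⨆ i : Fin (3^n), sumComm α ((PfAux.grid n (e.symm i)).cubes) b f x := by
      ring
end
end
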